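/- arXiv:math/0206076 — 2 statements merged into one kernel-verified Lean document; each statement's English description precedes it below -/
import Mathlib

section
/- Let G be a finite group, H ≤ G a subgroup, and v ∈ G. Let γ^G_v be the class function on G equal to |C_G(v)| on the G-conjugacy class of v and 0 elsewhere, and for h ∈ H let γ^H_h be defined analogously in H. Then the restriction to H of γ^G_v equals |H|⁻¹ Σ_{x ∈ G, x v x⁻¹ ∈ H} γ^H_{x v x⁻¹}. -/
open Finset

open scoped Classical in
/-- The class function `γ_w` taking the value `|C_G(w)|` on the conjugacy class
of `w` and `0` elsewhere. -/
noncomputable def gammaFn (G : Type*) [Group G] (w : G) : G → ℂ := fun v =>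
  if IsConj w v then (Nat.card (Subgroup.centralizer ({w} : Set G)) : ℂ) else 0

open scoped Classical in
lemma gammaFn_eq_count {K : Type*} [Group K] [Fintype K] (w t : K) :
    gammaFn K w t =
      ((Finset.univ.filter (fun z : K => z * w * z⁻¹ = t)).card : ℂ) := by
  unfold gammaFn
  split_ifs with hc
  · obtain ⟨u, hu⟩ := isConj_iff.mp hc
    have e : (Subgroup.centralizer ({w} : Set K)) ≃ {z : K // z * w * z⁻¹ = t} :=
      { toFun := fun z => ⟨u * z.1, by
          have hz : z.1 * w = w * z.1 :=
            Subgroup.mem_centralizer_singleton_iff.mp z.2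
          have : z.1 * w * z.1⁻¹ = w := by rw [hz]; group
          calc u * z.1 * w * (u * z.1)⁻¹ = u * (z.1 * w * z.1⁻¹) * u⁻¹ := by group
            _ = t := by rw [this]; exact hu⟩
        invFun := fun z => ⟨u⁻¹ * z.1, by
          rw [Subgroup.mem_centralizer_singleton_iff]
          have hz := z.2
          have : u⁻¹ * z.1 * w * (u⁻¹ * z.1)⁻¹ = w := by
            have : u⁻¹ * (z.1 * w * z.1⁻¹) * u = u⁻¹ * (u * w * u⁻¹) * u := by
              rw [hz, hu]
            calc u⁻¹ * z.1 * w * (u⁻¹ * z.1)⁻¹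
                = u⁻¹ * (z.1 * w * z.1⁻¹) * u := by group
              _ = u⁻¹ * (u * w * u⁻¹) * u := this
              _ = w := by group
          have := this
          calc u⁻¹ * z.1 * w = (u⁻¹ * z.1 * w * (u⁻¹ * z.1)⁻¹) * (u⁻¹ * z.1) := by group
            _ = w * (u⁻¹ * z.1) := by rw [this]⟩
        left_inv := fun z => by ext; simp [mul_assoc]
        right_inv := fun z => by ext; simp [mul_assoc] }
    rw [Nat.card_congr e, Nat.card_eq_fintype_card, Fintype.card_subtype]
  · symm
    norm_cast
    simp only [Finset.card_eq_zero, Finset.filter_eq_empty_iff]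
    exact fun z _ hz => hc (isConj_iff.mpr ⟨z, hz⟩)

open scoped Classical in
/-- Restriction of `γ^G_v` to a subgroup `H`:
`Res_H γ^G_v = |H|⁻¹ ∑_{x ∈ G, x v x⁻¹ ∈ H} γ^H_{x v x⁻¹}`. -/
theorem res_gammaFn {G : Type*} [Group G] [Fintype G] (H : Subgroup G) (v : G) :
    ∀ h : H, gammaFn G v (h : G) =
      (Nat.card H : ℂ)⁻¹ * ∑ x : G,
        if hx : x * v * x⁻¹ ∈ H then gammaFn H ⟨x * v * x⁻¹, hx⟩ h else 0 := by
  intro h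
  -- rewrite each summand as a count over H
  have step1 : ∀ x : G,
      (if hx : x * v * x⁻¹ ∈ H then gammaFn H ⟨x * v * x⁻¹, hx⟩ h else 0) =
      ((Finset.univ.filter
        (fun y : H => (y : G) * (x * v * x⁻¹) * (y : G)⁻¹ = (h : G))).card : ℂ) := by
    intro x
    by_cases hx : x * v * x⁻¹ ∈ H
    · rw [dif_pos hx, gammaFn_eq_count]
      congr 2
      ext y
      simp [Subtype.ext_iff]
    · rw [dif_neg hx]
      symm
      norm_cast
      simp only [Finset.card_eq_zero, Finset.filter_eq_empty_iff]
      intro y _ hy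
      exact hx (by
        have : x * v * x⁻¹ = (y : G)⁻¹ * (h : G) * (y : G) := by
          rw [← hy]; simp [mul_assoc]
        rw [this]
        exact H.mul_mem (H.mul_mem (H.inv_mem y.2) h.2) y.2)
  simp only [step1]
  -- turn cards into double sums and swap
  have step2 : ∀ x : G,
      ((Finset.univ.filter
        (fun y : H => (y : G) * (x * v * x⁻¹) * (y : G)⁻¹ = (h : G))).card : ℂ) =
      ∑ y : H, if (y : G) * (x * v * x⁻¹) * (y : G)⁻¹ = (h : G) then (1 : ℂ) else 0 := by
    intro x
    rw [Finset.card_filter]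
    push_cast
    rfl
  simp only [step2]
  rw [Finset.sum_comm]
  have step3 : ∀ y : H,
      (∑ x : G, if (y : G) * (x * v * x⁻¹) * (y : G)⁻¹ = (h : G) then (1 : ℂ) else 0) =
      ∑ x : G, if x * v * x⁻¹ = (h : G) then (1 : ℂ) else 0 := by
    intro y
    apply Fintype.sum_bijective (fun x : G => (y : G) * x)
      (Equiv.mulLeft (y : G)).bijective
    intro x
    have : (y : G) * (x * v * x⁻¹) * (y : G)⁻¹ = ((y : G) * x) * v * ((y : G) * x)⁻¹ := by
      group
    rw [this]
  simp only [step3, Finset.sum_const, Finset.card_univ, nsmul_eq_mul]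
  have hcount : (∑ x : G, if x * v * x⁻¹ = (h : G) then (1 : ℂ) else 0) =
      gammaFn G v (h : G) := by
    rw [gammaFn_eq_count, Finset.card_filter]
    push_cast
    rfl
  rw [hcount]
  have hH : (Nat.card H : ℂ) ≠ 0 := by
    simp [Nat.card_eq_fintype_card, Fintype.card_ne_zero]
  rw [Nat.card_eq_fintype_card]
  field_simp
end

section
/- Let Y be a free ℤ-module of finite rank and φ an automorphism of Y of finite order. Then det of φ acting on Y ⊗ ℝ equals (−1)^d, where d is the codimension of the fixed-point subspace of φ in Y ⊗ ℝ. -/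
open TensorProduct

open Polynomial Module LinearMap TensorProduct Filter

lemma my_charpoly_eval {K V : Type*} [Field K] [AddCommGroup V] [Module K V]
    [FiniteDimensional K V] (f : V →ₗ[K] V) (t : K) :
    f.charpoly.eval t = LinearMap.det (t • (1 : V →ₗ[K] V) - f) := by
  classical
  let b := Module.finBasis K V
  rw [← f.charpoly_toMatrix b, ← LinearMap.det_toMatrix b]
  rw [Matrix.charpoly, ← Polynomial.coe_evalRingHom, RingHom.map_det]
  congr 1
  ext i j
  by_cases h : i = j
  · subst h
    simp [Matrix.charmatrix_apply_eq, LinearMap.toMatrix_apply, Matrix.smul_apply,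
      Matrix.one_apply_eq, Finsupp.single_eq_same]
  · simp [Matrix.charmatrix_apply_ne _ _ _ h, Matrix.one_apply_ne h,
      LinearMap.toMatrix_apply, Finsupp.single_eq_of_ne (Ne.symm h), h]

/-- A finite order endomorphism of a real vector space without nonzero fixed vectors has
determinant `(-1) ^ dim`. -/
lemma my_det_of_no_fixed {V : Type*} [AddCommGroup V] [Module ℝ V] [FiniteDimensional ℝ V]
    (ψ : V →ₗ[ℝ] V) (n : ℕ) (hn : 0 < n) (h1 : ψ ^ n = 1)
    (hker : LinearMap.ker (ψ - 1) = ⊥) :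
    LinearMap.det ψ = (-1 : ℝ) ^ (Module.finrank ℝ V) := by
  have hdetpow : (LinearMap.det ψ) ^ n = 1 := by
    rw [← map_pow, h1, Module.End.one_eq_id, LinearMap.det_id]
  have habs : |LinearMap.det ψ| = 1 := by
    have h' : |LinearMap.det ψ| ^ n = (1 : ℝ) ^ n := by
      rw [← abs_pow, hdetpow, abs_one, one_pow]
    exact (pow_left_inj₀ (abs_nonneg _) zero_le_one hn.ne').mp h'
  have hd1 : LinearMap.det ψ = 1 ∨ LinearMap.det ψ = -1 := abs_eq (by norm_num) |>.mp habs
  -- no nonnegative real root of the characteristic polynomial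
  have hroot : ∀ t : ℝ, 0 ≤ t → ψ.charpoly.eval t ≠ 0 := by
    intro t ht h0
    rw [my_charpoly_eval] at h0
    obtain ⟨v, hv, hv0⟩ := Submodule.exists_mem_ne_zero_of_ne_bot
      (LinearMap.bot_lt_ker_of_det_eq_zero h0).ne'
    have hfv : ψ v = t • v := by
      have := LinearMap.mem_ker.mp hv
      simp only [LinearMap.sub_apply, LinearMap.smul_apply, Module.End.one_apply] at this
      linear_combination (norm := module) -this
    have hpow : ∀ m : ℕ, (ψ ^ m) v = t ^ m • v := by
      intro m
      induction m with
      | zero => simp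
      | succ m ih =>
        rw [pow_succ', Module.End.mul_apply, ih, map_smul, hfv, smul_smul, pow_succ', mul_comm]
    have htn : t ^ n = 1 := by
      have hv1 : v = t ^ n • v := by rw [← hpow, h1, Module.End.one_apply]
      by_contra htne
      have : (t ^ n - 1) • v = 0 := by rw [sub_smul, one_smul, ← hv1, sub_self]
      exact hv0 ((smul_eq_zero.mp this).resolve_left (sub_ne_zero.mpr htne))
    have ht1 : t = 1 := by
      have h' : t ^ n = (1 : ℝ) ^ n := by rw [htn, one_pow]
      exact (pow_left_inj₀ ht zero_le_one hn.ne').mp h'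
    have : v ∈ LinearMap.ker (ψ - 1) := by
      rw [LinearMap.mem_ker, LinearMap.sub_apply, Module.End.one_apply, hfv, ht1, one_smul,
        sub_self]
    rw [hker, Submodule.mem_bot] at this
    exact hv0 this
  -- positivity of the constant coefficient
  have h0pos : 0 < ψ.charpoly.eval 0 := by
    rcases lt_trichotomy (ψ.charpoly.eval 0) 0 with hneg | hzero | hpos
    · exfalso
      have hdeg : 0 < ψ.charpoly.degree := by
        by_contra hd
        push_neg at hd
        have : ψ.charpoly = 1 := (Polynomial.Monic.degree_le_zero_iff_eq_one
          ψ.charpoly_monic).mp hd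
        rw [this] at hneg; norm_num at hneg
      have htend := Polynomial.tendsto_atTop_of_leadingCoeff_nonneg ψ.charpoly hdeg
        (by rw [ψ.charpoly_monic.leadingCoeff]; norm_num)
      obtain ⟨b, hb1, hb0⟩ := ((htend.eventually_ge_atTop 1).and (eventually_ge_atTop 0)).exists
      have hmem : (0 : ℝ) ∈ Set.Icc (ψ.charpoly.eval 0) (ψ.charpoly.eval b) :=
        ⟨hneg.le, by linarith⟩
      obtain ⟨t, ht, h0⟩ := intermediate_value_Icc hb0
        (ψ.charpoly.continuous_aeval).continuousOn hmem
      exact hroot t ht.1 h0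
    · exact absurd hzero (hroot 0 le_rfl)
    · exact hpos
  have hdet : LinearMap.det ψ = (-1 : ℝ) ^ (finrank ℝ V) * ψ.charpoly.eval 0 := by
    rw [LinearMap.det_eq_sign_charpoly_coeff, Polynomial.coeff_zero_eq_eval_zero]
  have hs : (-1 : ℝ) ^ (finrank ℝ V) = 1 ∨ (-1 : ℝ) ^ (finrank ℝ V) = -1 := neg_one_pow_eq_or ℝ _
  have hc : ψ.charpoly.eval 0 = 1 := by
    rcases hs with hs | hs <;> rcases hd1 with hd | hd <;> rw [hdet, hs] at hd <;> nlinarith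
  rw [hdet, hc, mul_one]

/-- A finite order endomorphism of a finite-dimensional real vector space has determinant
`(-1) ^ (codimension of the fixed space)`. -/
lemma my_det_finite_order {V : Type*} [AddCommGroup V] [Module ℝ V] [FiniteDimensional ℝ V]
    (ψ : V →ₗ[ℝ] V) (n : ℕ) (hn : 0 < n) (h1 : ψ ^ n = 1) :
    LinearMap.det ψ = (-1 : ℝ) ^ (Module.finrank ℝ V -
      Module.finrank ℝ (LinearMap.ker (ψ - 1))) := by
  classical
  set K := LinearMap.ker (ψ - 1) with hK
  set W := LinearMap.range (ψ - 1) with hWdef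
  have hfix : ∀ x ∈ K, ψ x = x := by
    intro x hx
    have h := LinearMap.mem_ker.mp hx
    simp only [LinearMap.sub_apply, Module.End.one_apply] at h
    linear_combination (norm := module) h
  set π : V →ₗ[ℝ] V := (n : ℝ)⁻¹ • ∑ i ∈ Finset.range n, ψ ^ i with hπ
  have hnR : (n : ℝ) ≠ 0 := Nat.cast_ne_zero.mpr hn.ne'
  have hshift : ∑ i ∈ Finset.range n, ψ ^ (i + 1) = ∑ i ∈ Finset.range n, ψ ^ i := by
    have h1' : (∑ i ∈ Finset.range n, ψ ^ (i + 1)) + ψ ^ 0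
        = (∑ i ∈ Finset.range n, ψ ^ i) + ψ ^ n :=
      (Finset.sum_range_succ' (fun i => ψ ^ i) n).symm.trans
        (Finset.sum_range_succ (fun i => ψ ^ i) n)
    rw [pow_zero, h1] at h1'
    exact add_right_cancel h1'
  have hψπ : ψ * π = π := by
    rw [hπ, mul_smul_comm, Finset.mul_sum]
    congr 1
    exact (Finset.sum_congr rfl fun i _ => (pow_succ' ψ i).symm).trans hshift
  have hπψ : π * ψ = π := by
    have hsm : (∑ i ∈ Finset.range n, ψ ^ i) * ψ = ∑ i ∈ Finset.range n, ψ ^ i := by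
      rw [Finset.sum_mul]
      exact (Finset.sum_congr rfl fun i _ => (pow_succ ψ i).symm).trans hshift
    rw [hπ, smul_mul_assoc, hsm]
  have hπmemK : ∀ x : V, π x ∈ K := by
    intro x
    have h0 : (ψ - 1) * π = 0 := by rw [sub_mul, one_mul, hψπ, sub_self]
    have : (ψ - 1) (π x) = ((ψ - 1) * π) x := rfl
    rw [hK, LinearMap.mem_ker, this, h0, LinearMap.zero_apply]
  have hπfix : ∀ x ∈ K, π x = x := by
    intro x hx
    have hpowfix : ∀ i : ℕ, (ψ ^ i) x = x := by
      intro i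
      induction i with
      | zero => simp
      | succ i ih => rw [pow_succ', Module.End.mul_apply, ih, hfix x hx]
    rw [hπ]
    simp only [LinearMap.smul_apply, LinearMap.sum_apply, hpowfix]
    rw [Finset.sum_const, Finset.card_range, ← Nat.cast_smul_eq_nsmul ℝ, smul_smul,
      inv_mul_cancel₀ hnR, one_smul]
  have hπW0 : ∀ x ∈ W, π x = 0 := by
    rintro x ⟨y, rfl⟩
    have h0 : π * (ψ - 1) = 0 := by rw [mul_sub, mul_one, hπψ, sub_self]
    have : π ((ψ - 1) y) = (π * (ψ - 1)) y := rfl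
    rw [this, h0, LinearMap.zero_apply]
  have hdisj : Disjoint K W := by
    rw [disjoint_iff, eq_bot_iff]
    rintro x ⟨hxK, hxW⟩
    rw [Submodule.mem_bot]
    rw [← hπfix x hxK]
    exact hπW0 x hxW
  have hWmem : ∀ i : ℕ, ∀ x : V, x - (ψ ^ i) x ∈ W := by
    intro i x
    have hgeo : ψ ^ i - 1 = (ψ - 1) * ∑ j ∈ Finset.range i, ψ ^ j := (mul_geom_sum ψ i).symm
    have hx : (ψ ^ i - 1) x ∈ W := by
      refine ⟨(∑ j ∈ Finset.range i, ψ ^ j) x, ?_⟩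
      rw [← Module.End.mul_apply, ← hgeo]
    have := W.neg_mem hx
    simpa only [LinearMap.sub_apply, Module.End.one_apply, neg_sub] using this
  have hcodis : Codisjoint K W := by
    rw [codisjoint_iff, eq_top_iff]
    intro x _
    have h1x : x - π x ∈ W := by
      have hx2 : x - π x = (n : ℝ)⁻¹ • ∑ i ∈ Finset.range n, (x - (ψ ^ i) x) := by
        rw [Finset.sum_sub_distrib, smul_sub, Finset.sum_const, Finset.card_range,
          ← Nat.cast_smul_eq_nsmul ℝ, smul_smul, inv_mul_cancel₀ hnR, one_smul, hπ]
        simp only [LinearMap.smul_apply, LinearMap.sum_apply]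
      rw [hx2]
      exact W.smul_mem _ (Submodule.sum_mem _ fun i _ => hWmem i x)
    have hx : x = π x + (x - π x) := by abel
    rw [hx]
    exact Submodule.add_mem_sup (hπmemK x) h1x
  have hc : IsCompl K W := ⟨hdisj, hcodis⟩
  have hKinv : ∀ x ∈ K, ψ x ∈ K := fun x hx => by rw [hfix x hx]; exact hx
  have hWinv : ∀ x ∈ W, ψ x ∈ W := by
    rintro x ⟨y, rfl⟩
    refine ⟨ψ y, ?_⟩
    simp only [LinearMap.sub_apply, Module.End.one_apply, map_sub]
  set F := ψ.restrict hKinv with hFdef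
  set G := ψ.restrict hWinv with hGdef
  have hF : F = LinearMap.id := by
    refine LinearMap.ext fun x => Subtype.ext ?_
    rw [hFdef, LinearMap.restrict_coe_apply, LinearMap.id_apply]
    exact hfix x x.2
  set e := Submodule.prodEquivOfIsCompl K W hc with he
  have hcomm : (e : K × W →ₗ[ℝ] V) ∘ₗ (F.prodMap G) = ψ ∘ₗ (e : K × W →ₗ[ℝ] V) := by
    refine LinearMap.ext fun x => ?_
    simp only [LinearMap.coe_comp, Function.comp_apply, LinearEquiv.coe_coe,
      LinearMap.prodMap_apply, Submodule.coe_prodEquivOfIsCompl', he, hFdef, hGdef,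
      LinearMap.restrict_coe_apply, map_add]
  have hψeq : ψ = (e : K × W →ₗ[ℝ] V) ∘ₗ (F.prodMap G) ∘ₗ ((e.symm : V ≃ₗ[ℝ] K × W) : V →ₗ[ℝ] K × W) := by
    refine LinearMap.ext fun x => ?_
    have hx := LinearMap.congr_fun hcomm (e.symm x)
    simp only [LinearMap.coe_comp, Function.comp_apply, LinearEquiv.coe_coe] at hx ⊢
    rw [hx, e.apply_symm_apply]
  have hdet : LinearMap.det ψ = LinearMap.det (F.prodMap G) := by
    conv_lhs => rw [hψeq]
    exact LinearMap.det_conj (F.prodMap G) e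
  have hdetprod : LinearMap.det (F.prodMap G) = LinearMap.det F * LinearMap.det G := by
    rw [LinearMap.det_eq_sign_charpoly_coeff, LinearMap.det_eq_sign_charpoly_coeff F,
      LinearMap.det_eq_sign_charpoly_coeff G, LinearMap.charpoly_prodMap,
      Polynomial.mul_coeff_zero, Module.finrank_prod, pow_add]
    ring
  have hFdet : LinearMap.det F = 1 := by rw [hF, LinearMap.det_id]
  have hGn : G ^ n = 1 := by
    refine LinearMap.ext fun x => Subtype.ext ?_
    have hx := LinearMap.congr_fun (Module.End.pow_restrict (f' := ψ) n hWinv) x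
    calc ((G ^ n) x : V) = ((ψ ^ n).restrict _ x : V) := congrArg _ hx
      _ = (ψ ^ n) x := LinearMap.restrict_coe_apply _ _ _
      _ = x := by rw [h1]; rfl
  have hGker : LinearMap.ker (G - 1) = ⊥ := by
    rw [eq_bot_iff]
    intro x hx
    have hx0 := LinearMap.mem_ker.mp hx
    have hx1 : ψ (x : V) = x := by
      have := congrArg (Subtype.val) hx0
      simp only [LinearMap.sub_apply, Module.End.one_apply, AddSubgroupClass.coe_sub,
        ZeroMemClass.coe_zero, hGdef, LinearMap.restrict_coe_apply] at this
      linear_combination (norm := module) this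
    have hxK : (x : V) ∈ K := by
      rw [hK, LinearMap.mem_ker, LinearMap.sub_apply, Module.End.one_apply, hx1, sub_self]
    have hmem : (x : V) ∈ K ⊓ W := ⟨hxK, x.2⟩
    rw [hdisj.eq_bot, Submodule.mem_bot] at hmem
    rw [Submodule.mem_bot]
    exact Subtype.ext hmem
  have hGdet : LinearMap.det G = (-1 : ℝ) ^ (Module.finrank ℝ W) :=
    my_det_of_no_fixed G n hn hGn hGker
  have hrank : Module.finrank ℝ W + Module.finrank ℝ K = Module.finrank ℝ V :=
    LinearMap.finrank_range_add_finrank_ker (ψ - 1)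
  have hKle : Module.finrank ℝ K ≤ Module.finrank ℝ V := by omega
  have hWr : Module.finrank ℝ W = Module.finrank ℝ V - Module.finrank ℝ K := by omega
  rw [hdet, hdetprod, hFdet, hGdet, one_mul, hWr]


/-- Let `Y` be a free `ℤ`-module of finite rank and `φ` an automorphism of `Y`
of finite order. Then the determinant of `φ` acting on `Y ⊗ ℝ` equals `(−1)^d`,
where `d` is the codimension of the fixed-point subspace of `φ` in `Y ⊗ ℝ`. -/
theorem det_finite_order_aut_eq_neg_one_pow
    (Y : Type*) [AddCommGroup Y] [Module ℤ Y] [Module.Free ℤ Y] [Module.Finite ℤ Y]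
    (φ : Y ≃ₗ[ℤ] Y) (n : ℕ) (hn : 0 < n) (hord : φ ^ n = 1) :
    LinearMap.det (LinearMap.baseChange ℝ (φ : Y →ₗ[ℤ] Y)) =
      (-1 : ℝ) ^ (Module.finrank ℝ (ℝ ⊗[ℤ] Y) -
        Module.finrank ℝ (LinearMap.ker
          (LinearMap.baseChange ℝ (φ : Y →ₗ[ℤ] Y) - LinearMap.id))) := by
  have hcoe : ∀ m : ℕ, ((φ ^ m : Y ≃ₗ[ℤ] Y) : Y →ₗ[ℤ] Y) = (φ : Y →ₗ[ℤ] Y) ^ m := by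
    intro m
    induction m with
    | zero => rfl
    | succ m ih => rw [pow_succ, pow_succ, ← ih]; rfl
  have hφn : ((φ : Y →ₗ[ℤ] Y)) ^ n = 1 := by
    rw [← hcoe n, hord]; rfl
  have hψn : (LinearMap.baseChange ℝ (φ : Y →ₗ[ℤ] Y)) ^ n = 1 := by
    rw [← LinearMap.baseChange_pow, hφn, LinearMap.baseChange_one]
  have := my_det_finite_order (LinearMap.baseChange ℝ (φ : Y →ₗ[ℤ] Y)) n hn hψn
  rw [this]
  rfl
end
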